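/- In the late-preemption causal model with binary endogenous variables ST, BT, SH, BH, BS, equations BS = BH ∨ SH, SH = ST, BH = BT ∧ ¬SH, and a context u in which ST=1 and BT=1, it holds that ST=1 CNESS-causes BS=1 w.r.t. (M,u): ST=1 NESS-causes BS=1 along the path (SH), and ST=0 does not NESS-cause BS=1 along any subpath of (SH) w.r.t. (M_{ST←0},u). -/

import Mathlib

/-!
Structural equation models (causal models) à la Pearl/Halpern, formalizing
Beckers' "The Counterfactual NESS Definition of Causation".

A causal model over a context type `Ctx` (settings of the exogenous variables),
endogenous variables `V` and values `Val` consists of finite nonempty ranges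
`R X`, structural equations `F X`, and a strong-recursiveness (acyclicity)
witness: an order `ord` such that `F X` only depends on variables of lower order.
-/

structure CausalModel (Ctx V Val : Type) where
  R : V → Finset Val
  R_nonempty : ∀ X, (R X).Nonempty
  F : V → Ctx → (V → Val) → Val
  ord : V → ℕ
  F_resp : ∀ X u s s', (∀ Y, ord Y < ord X → s Y = s' Y) → F X u s = F X u s'

namespace CausalModel

variable {Ctx V Val : Type}

/-- The unique solution of the equations in context `u` (it exists and is
unique by strong recursiveness). `(M,u) ⊨ X = x` iff `M.sol u X = x`. -/
noncomputable def sol (M : CausalModel Ctx V Val) (u : Ctx) : V → Val :=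
  fun X =>
    M.F X u (fun Y => if h : M.ord Y < M.ord X then M.sol u Y else (M.R_nonempty Y).choose)
termination_by X => M.ord X
decreasing_by exact h

/-- `M.sol u` indeed solves all the equations. -/
theorem sol_eq (M : CausalModel Ctx V Val) (u : Ctx) (X : V) :
    M.sol u X = M.F X u (M.sol u) := by
  rw [sol]
  exact M.F_resp X u _ _ (fun Y hY => dif_pos hY)

variable [DecidableEq V]

/-- `X⃗ = x⃗` (given by the set `Xs` and the assignment `xs`) is sufficient for
`E = e` w.r.t. `(M, u)`: the equation for `E` outputs `e` on every setting of the
endogenous variables (in their ranges) that agrees with `xs` on `Xs`. -/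
def Sufficient (M : CausalModel Ctx V Val) (u : Ctx) (Xs : Finset V) (xs : V → Val)
    (E : V) (e : Val) : Prop :=
  ∀ s : V → Val, (∀ Y, s Y ∈ M.R Y) → (∀ X ∈ Xs, s X = xs X) → M.F E u s = e

/-- The intervened model `M_{X⃗ ← x⃗}`: the equations of variables in `Xs` are
replaced by the constants given by `xs`. -/
def intervene (M : CausalModel Ctx V Val) (Xs : Finset V) (xs : V → Val) :
    CausalModel Ctx V Val where
  R := M.R
  R_nonempty := M.R_nonempty
  F := fun X u s => if X ∈ Xs then xs X else M.F X u s
  ord := M.ord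
  F_resp := by
    intro X u s s' h
    by_cases hX : X ∈ Xs
    · simp [hX]
    · simpa [hX] using M.F_resp X u s s' h

/-- `W⃗ = w⃗` (given by `Ws, ws`) is a witness for `C = c` directly NESS-causing
`E = e` w.r.t. `(M, u)`: `C = c` and `W⃗ = w⃗` actually hold, `{C = c} ∪ {W⃗ = w⃗}`
is sufficient for `E = e`, and `W⃗ = w⃗` alone is not. -/
def DirectNESSWith (M : CausalModel Ctx V Val) (u : Ctx) (C : V) (c : Val) (E : V) (e : Val)
    (Ws : Finset V) (ws : V → Val) : Prop :=
  M.sol u C = c ∧ (∀ W ∈ Ws, M.sol u W = ws W) ∧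
  M.Sufficient u (insert C Ws) (Function.update ws C c) E e ∧
  ¬ M.Sufficient u Ws ws E e

/-- `C = c` directly NESS-causes `E = e` w.r.t. `(M, u)`. -/
def DirectNESS (M : CausalModel Ctx V Val) (u : Ctx) (C : V) (c : Val) (E : V) (e : Val) :
    Prop :=
  ∃ (Ws : Finset V) (ws : V → Val), M.DirectNESSWith u C c E e Ws ws

/-- `C = c` NESS-causes `E = e` along the path `p = (C₁, …, Cₙ)` w.r.t. `(M, u)`:
there are values `c₁, …, cₙ` such that `C = c` directly NESS-causes `C₁ = c₁`, …,
and `Cₙ = cₙ` directly NESS-causes `E = e`. (A direct NESS-cause is a NESS-cause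
along the empty path.) -/
def NESSAlong (M : CausalModel Ctx V Val) (u : Ctx) (C : V) (c : Val) (p : List V)
    (E : V) (e : Val) : Prop :=
  ∃ cs : List Val, cs.length = p.length ∧
    List.Chain (fun a b => M.DirectNESS u a.1 a.2 b.1 b.2) (C, c) (p.zip cs ++ [(E, e)])

/-- `C = c` NESS-causes `E = e` w.r.t. `(M, u)`: there is a chain of direct
NESS-causes from `C = c` to `E = e`. -/
def NESS (M : CausalModel Ctx V Val) (u : Ctx) (C : V) (c : Val) (E : V) (e : Val) : Prop :=
  ∃ p : List V, M.NESSAlong u C c p E e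

/-- The BV definition: `C = c` NESS-causes `E = e` w.r.t. `(M, u)` and there is a
`c' ∈ R(C)` such that `C = c'` does not NESS-cause `E = e` w.r.t. `(M_{C ← c'}, u)`. -/
def BVCause (M : CausalModel Ctx V Val) (u : Ctx) (C : V) (c : Val) (E : V) (e : Val) :
    Prop :=
  M.NESS u C c E e ∧
    ∃ c' ∈ M.R C, ¬ (M.intervene {C} (fun _ => c')).NESS u C c' E e

/-- The CNESS definition: `C = c` NESS-causes `E = e` along some path `p` w.r.t.
`(M, u)` and there is a `c' ∈ R(C)` such that `C = c'` does not NESS-cause `E = e`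
along any subpath of `p` (a path all of whose variables are in `p`) w.r.t.
`(M_{C ← c'}, u)`. -/
def CNESSCause (M : CausalModel Ctx V Val) (u : Ctx) (C : V) (c : Val) (E : V) (e : Val) :
    Prop :=
  ∃ p : List V, M.NESSAlong u C c p E e ∧
    ∃ c' ∈ M.R C, ∀ p' : List V, (∀ X ∈ p', X ∈ p) →
      ¬ (M.intervene {C} (fun _ => c')).NESSAlong u C c' p' E e

/-- `E = e` is counterfactually dependent on `C = c` w.r.t. `(M, u)`:
`(M,u) ⊨ C = c ∧ E = e` and there is a `c' ∈ R(C)` with `(M,u) ⊨ [C ← c'] ¬(E = e)`. -/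
def CfDep (M : CausalModel Ctx V Val) (u : Ctx) (C : V) (c : Val) (E : V) (e : Val) : Prop :=
  M.sol u C = c ∧ M.sol u E = e ∧
    ∃ c' ∈ M.R C, (M.intervene {C} (fun _ => c')).sol u E ≠ e

/-- `E = e` is counterfactually dependent on `C = c` given the intervention
`X⃗ ← x⃗`: in `M_{X⃗ ← x⃗}` with context `u`, `C = c` and `E = e` hold, and there is
a `c' ∈ R(C)` such that additionally intervening with `C ← c'` makes `E = e` false. -/
def CfDepGiven (M : CausalModel Ctx V Val) (u : Ctx) (Xs : Finset V) (xs : V → Val)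
    (C : V) (c : Val) (E : V) (e : Val) : Prop :=
  (M.intervene Xs xs).sol u C = c ∧ (M.intervene Xs xs).sol u E = e ∧
    ∃ c' ∈ M.R C, ((M.intervene Xs xs).intervene {C} (fun _ => c')).sol u E ≠ e

/-- `Y` is a parent of `X`: the equation `F X` varies with the value of `Y`
for some context and some setting (within the ranges) of the other variables. -/
def Parent (M : CausalModel Ctx V Val) (Y X : V) : Prop :=
  ∃ (u : Ctx) (s : V → Val) (y y' : Val),
    (∀ Z, s Z ∈ M.R Z) ∧ y ∈ M.R Y ∧ y' ∈ M.R Y ∧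
    M.F X u (Function.update s Y y) ≠ M.F X u (Function.update s Y y')

end CausalModel
/-- Variables for the late-preemption model: `ST`, `BT`, `SH`, `BH`, `BS`. -/
inductive VL | ST | BT | SH | BH | BS
deriving DecidableEq

/-- The late-preemption model with equations `BS = BH ∨ SH`, `SH = ST`,
`BH = BT ∧ ¬SH`, in a context where `ST = st0` and `BT = 1`. -/
def ML (st0 : Bool) : CausalModel Unit VL Bool where
  R := fun _ => Finset.univ
  R_nonempty := fun _ => Finset.univ_nonempty
  F := fun X _ s =>
    match X with
    | .ST => st0
    | .BT => true
    | .SH => s .ST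
    | .BH => s .BT && !(s .SH)
    | .BS => s .BH || s .SH
  ord := fun X => match X with | .ST => 0 | .BT => 0 | .SH => 1 | .BH => 2 | .BS => 3
  F_resp := by
    intro X u s s' h
    cases X
    · rfl
    · rfl
    · show s VL.ST = s' VL.ST
      exact h VL.ST (by decide)
    · show (s VL.BT && !(s VL.SH)) = (s' VL.BT && !(s' VL.SH))
      rw [h VL.BT (by decide), h VL.SH (by decide)]
    · show (s VL.BH || s VL.SH) = (s' VL.BH || s' VL.SH)
      rw [h VL.BH (by decide), h VL.SH (by decide)]

/-!
In `M`, `ST = 1` alone forces `SH = 1` and `SH = 1` alone forces `BS = 1`, while neither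
`SH = 1` nor `BS = 1` holds under every setting; so both links of the path `(SH)` are direct
NESS links with empty witness. In `M_{ST ← 0}`, the last link of a chain along a subpath of
`(SH)` would make `ST = 0` or `SH = 0` a direct NESS-cause of `BS = 1`. The former fails because
`ST` is not a parent of `BS`; the latter because `BH = 1` there: a witness containing `BH = 1`
is sufficient for `BS = 1` on its own, and one without `BH` is refuted by `BH = 0, SH = 0`.
-/

namespace CausalModel

variable {Ctx V Val : Type} [DecidableEq V] {M : CausalModel Ctx V Val} {u : Ctx}
  {C E : V} {c e : Val}

theorem intervene_F_of_notMem {Xs : Finset V} {xs : V → Val} {X : V} (hX : X ∉ Xs)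
    (s : V → Val) : (M.intervene Xs xs).F X u s = M.F X u s :=
  if_neg hX

theorem DirectNESS.sol_eq (h : M.DirectNESS u C c E e) : M.sol u C = c := by
  obtain ⟨_, _, hC, -⟩ := h
  exact hC

theorem directNESS_of_sufficient_singleton (hC : M.sol u C = c)
    (hsuff : M.Sufficient u {C} (fun _ => c) E e) (hnot : ¬ M.Sufficient u ∅ (fun _ => c) E e) :
    M.DirectNESS u C c E e :=
  ⟨∅, fun _ => c, hC, by simp, by simpa using hsuff, hnot⟩

theorem not_directNESS_of_not_parent (hpar : ¬ M.Parent C E) (hc : c ∈ M.R C) :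
    ¬ M.DirectNESS u C c E e := by
  rintro ⟨Ws, ws, -, -, hsuff, hnot⟩
  refine hnot fun s hs hWs => ?_
  -- since `C` is not a parent of `E`, resetting `C` from `s C` to `c` does not change `E`
  have hcause : M.F E u (Function.update s C c) = e := by
    refine hsuff _ (fun Y => ?_) (fun X hX => ?_)
    · rcases eq_or_ne Y C with rfl | hY
      · simpa using hc
      · simpa [hY] using hs Y
    · rcases eq_or_ne X C with rfl | hX'
      · simp
      · simpa [hX'] using hWs X ((Finset.mem_insert.mp hX).resolve_left hX')
  by_contra hne
  exact hpar ⟨u, s, c, s C, hs, hc, hs C, by rwa [hcause, Function.update_eq_self, ne_comm]⟩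

theorem NESSAlong.exists_directNESS_last {p : List V} (h : M.NESSAlong u C c p E e) :
    ∃ X ∈ C :: p, ∃ x, M.DirectNESS u X x E e := by
  obtain ⟨cs, -, hchain⟩ := h
  have hlast := List.IsChain.rel_getLast_head_of_append (l₁ := (C, c) :: p.zip cs)
    (l₂ := [(E, e)]) hchain (List.cons_ne_nil _ _) (List.cons_ne_nil _ _)
  refine ⟨_, ?_, _, hlast⟩
  rcases List.mem_cons.mp (List.getLast_mem (List.cons_ne_nil (C, c) (p.zip cs))) with h | h
  · rw [h]
    exact List.mem_cons_self
  · exact List.mem_cons_of_mem _ (List.of_mem_zip h).1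

end CausalModel

namespace ML

open CausalModel

abbrev ML₀ : CausalModel Unit VL Bool := (ML true).intervene {VL.ST} (fun _ => false)

theorem sol_ST : (ML true).sol () VL.ST = true := by
  rw [sol_eq]
  rfl

theorem sol_SH : (ML true).sol () VL.SH = true := by
  rw [sol_eq]
  exact sol_ST

theorem directNESS_ST_SH : (ML true).DirectNESS () VL.ST true VL.SH true :=
  directNESS_of_sufficient_singleton sol_ST
    (fun _ _ hs => hs VL.ST (Finset.mem_singleton_self _))
    (fun h => Bool.false_ne_true (h (fun _ => false) (fun _ => Finset.mem_univ _) (by simp)))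

theorem directNESS_SH_BS : (ML true).DirectNESS () VL.SH true VL.BS true :=
  directNESS_of_sufficient_singleton sol_SH
    (fun s _ hs => by
      change (s VL.BH || s VL.SH) = true
      rw [hs VL.SH (Finset.mem_singleton_self _), Bool.or_true])
    (fun h => Bool.false_ne_true (h (fun _ => false) (fun _ => Finset.mem_univ _) (by simp)))

theorem intervene_sol_ST : ML₀.sol () VL.ST = false := by
  rw [sol_eq]
  rfl

theorem intervene_sol_SH : ML₀.sol () VL.SH = false := by
  rw [sol_eq, intervene_F_of_notMem (by decide)]
  exact intervene_sol_ST

theorem intervene_sol_BH : ML₀.sol () VL.BH = true := by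
  have hBT : ML₀.sol () VL.BT = true := by
    rw [sol_eq, intervene_F_of_notMem (by decide)]
    rfl
  rw [sol_eq, intervene_F_of_notMem (by decide)]
  change (ML₀.sol () VL.BT && !ML₀.sol () VL.SH) = true
  rw [hBT, intervene_sol_SH]
  rfl

theorem not_parent_intervene_ST_BS : ¬ ML₀.Parent VL.ST VL.BS := by
  rintro ⟨_, _, _, _, -, -, -, h⟩
  simp [intervene, ML] at h

theorem not_directNESS_intervene_SH_BS : ¬ ML₀.DirectNESS () VL.SH false VL.BS true := by
  rintro ⟨Ws, ws, -, hWs, hsuff, hnot⟩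
  by_cases hBH : VL.BH ∈ Ws
  · refine hnot fun s _ hs => ?_
    have hsBH : s VL.BH = true := (hs _ hBH).trans ((hWs _ hBH).symm.trans intervene_sol_BH)
    simp [intervene, ML, hsBH]
  · have hBS := hsuff (Function.update (Function.update ws VL.SH false) VL.BH false)
      (fun _ => Finset.mem_univ _) fun X hX => by
        have hX' : X ≠ VL.BH := by
          rintro rfl
          exact hBH ((Finset.mem_insert.mp hX).resolve_left (by decide))
        rw [Function.update_of_ne hX']
    simp [intervene, ML] at hBS

theorem not_nessAlong_intervene_of_subset (p' : List VL) (hp' : ∀ X ∈ p', X ∈ [VL.SH]) :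
    ¬ ML₀.NESSAlong () VL.ST false p' VL.BS true := by
  intro h
  obtain ⟨X, hX, x, hcause⟩ := h.exists_directNESS_last
  rcases List.mem_cons.mp hX with rfl | hX
  · exact not_directNESS_of_not_parent not_parent_intervene_ST_BS (Finset.mem_univ x) hcause
  · obtain rfl : X = VL.SH := List.mem_singleton.mp (hp' X hX)
    obtain rfl : x = false := hcause.sol_eq.symm.trans intervene_sol_SH
    exact not_directNESS_intervene_SH_BS hcause

end ML

/-- In the late-preemption model (context with `ST = 1` and
`BT = 1`), `ST = 1` NESS-causes `BS = 1` along the path `(SH)`, `ST = 0` does not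
NESS-cause `BS = 1` along any subpath of `(SH)` w.r.t. `(M_{ST ← 0}, u)`, and hence
`ST = 1` CNESS-causes `BS = 1` w.r.t. `(M, u)`. -/
theorem late_preemption_cness :
    (ML true).NESSAlong () VL.ST true [VL.SH] VL.BS true ∧
      (∀ p' : List VL, (∀ X ∈ p', X ∈ [VL.SH]) →
        ¬ ((ML true).intervene {VL.ST} (fun _ => false)).NESSAlong () VL.ST false p'
            VL.BS true) ∧
      (ML true).CNESSCause () VL.ST true VL.BS true := by
  have hpath : (ML true).NESSAlong () VL.ST true [VL.SH] VL.BS true :=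
    ⟨[true], rfl, .cons_cons ML.directNESS_ST_SH (.cons_cons ML.directNESS_SH_BS (.singleton _))⟩
  exact ⟨hpath, ML.not_nessAlong_intervene_of_subset,
    [VL.SH], hpath, false, Finset.mem_univ _, ML.not_nessAlong_intervene_of_subset⟩
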